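/- arXiv:2006.13218 — 2 statements merged into one kernel-verified Lean document; each statement's English description precedes it below -/
import Mathlib

section
/- In a snake graph G = (G_1, ..., G_d) in which the three consecutive tiles (G_{k-1}, G_k, G_{k+1}) form a zig-zag with East(G_k) and South(G_k) being boundary edges (i.e., G_{k+1} lies on top of G_k and G_k lies to the right of G_{k-1}), every perfect matching of G contains exactly one of the two edges East(G_k) and South(G_k). -/
/- ## Snake graphs on the integer lattice -/

abbrev Vtx : Type := ℤ × ℤ
abbrev Edge : Type := Sym2 Vtx

/-- One gluing move: `true` = new tile to the right, `false` = new tile on top. -/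
def mv (p : Vtx) (m : Bool) : Vtx := if m then (p.1 + 1, p.2) else (p.1, p.2 + 1)

/-- Positions (south-west corners) of the tiles of the snake graph with move list `ms`;
the snake graph has `ms.length + 1` tiles, the first at `(0,0)`. -/
def positions (ms : List Bool) : List Vtx := ms.scanl mv (0, 0)

def tilePos (ms : List Bool) (t : ℕ) : Vtx := (positions ms).getD t (0, 0)

def tileVerts (p : Vtx) : Finset Vtx :=
  {p, (p.1 + 1, p.2), (p.1, p.2 + 1), (p.1 + 1, p.2 + 1)}

def eS (p : Vtx) : Edge := s(p, (p.1 + 1, p.2))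
def eW (p : Vtx) : Edge := s(p, (p.1, p.2 + 1))
def eN (p : Vtx) : Edge := s((p.1, p.2 + 1), (p.1 + 1, p.2 + 1))
def eE (p : Vtx) : Edge := s((p.1 + 1, p.2), (p.1 + 1, p.2 + 1))

def tileEdges (p : Vtx) : Finset Edge := {eS p, eW p, eN p, eE p}

def snakeVerts (ms : List Bool) : Finset Vtx := (positions ms).toFinset.biUnion tileVerts
def snakeEdges (ms : List Bool) : Finset Edge := (positions ms).toFinset.biUnion tileEdges

/-- A perfect matching of the snake graph: a set of edges covering every vertex exactly once. -/
def IsPerfectMatching (ms : List Bool) (P : Finset Edge) : Prop :=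
  P ⊆ snakeEdges ms ∧ ∀ v ∈ snakeVerts ms, ∃! e, e ∈ P ∧ v ∈ e

/-- Same, for a possibly infinite set of edges. -/
def IsPerfectMatchingSet (ms : List Bool) (P : Set Edge) : Prop :=
  P ⊆ ↑(snakeEdges ms) ∧ ∀ v ∈ snakeVerts ms, ∃! e, e ∈ P ∧ v ∈ e

/-- A boundary edge: an edge belonging to exactly one tile. -/
def IsBoundaryEdge (ms : List Bool) (e : Edge) : Prop :=
  ((positions ms).toFinset.filter (fun p => e ∈ tileEdges p)).card = 1

/-- Two boundary edges lie in the same parity class iff they are joined by an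
even-length walk along the boundary (consecutive boundary edges share a vertex). -/
def SameParity (ms : List Bool) (e f : Edge) : Prop :=
  Relation.ReflTransGen
    (fun a b => ∃ c,
      (a ≠ c ∧ IsBoundaryEdge ms a ∧ IsBoundaryEdge ms c ∧ ∃ v, v ∈ a ∧ v ∈ c) ∧
      (c ≠ b ∧ IsBoundaryEdge ms c ∧ IsBoundaryEdge ms b ∧ ∃ v, v ∈ c ∧ v ∈ b)) e f

/- ## The orientation of diagonals induced by a perfect matching -/

def NWv (p : Vtx) : Vtx := (p.1, p.2 + 1)
def SEv (p : Vtx) : Vtx := (p.1 + 1, p.2)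
def NEv (p : Vtx) : Vtx := (p.1 + 1, p.2 + 1)

/-- Entry point of the alternating walk on the diagonal of tile `t`
(`o t = true` means the diagonal is oriented "down", i.e. from NW to SE). -/
def diagIn (ms : List Bool) (o : ℕ → Bool) (t : ℕ) : Vtx :=
  if o t then NWv (tilePos ms t) else SEv (tilePos ms t)

def diagOut (ms : List Bool) (o : ℕ → Bool) (t : ℕ) : Vtx :=
  if o t then SEv (tilePos ms t) else NWv (tilePos ms t)

/-- The list of matched edges traversed by the alternating walk from the SW vertex of the
first tile to the NE vertex of the last tile, given the diagonal orientations `o`. -/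
def walkEdgeList (ms : List Bool) (o : ℕ → Bool) : List Edge :=
  s(((0, 0) : Vtx), diagIn ms o 0) ::
    ((List.range ms.length).map fun t => s(diagOut ms o t, diagIn ms o (t + 1))) ++
      [s(diagOut ms o ms.length, NEv (tilePos ms ms.length))]

/-- `o` is the orientation of the diagonals induced by the perfect matching `P`:
the alternating walk uses each matched edge exactly once, and its matched edges are
exactly the edges of `P`. -/
def IsInducedOrientation (ms : List Bool) (P : Finset Edge) (o : ℕ → Bool) : Prop :=
  (walkEdgeList ms o).Nodup ∧ P = (walkEdgeList ms o).toFinset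

/-- The set of (0-indexed) tiles whose diagonal is positive: "down" and relative
orientation `+1` (equivalently even index), or "up" and odd index. -/
def heightSet (ms : List Bool) (o : ℕ → Bool) : Set ℕ :=
  {t | t ≤ ms.length ∧ (o t = true ↔ Even t)}

def HeightOf (ms : List Bool) (P : Finset Edge) (I : Set ℕ) : Prop :=
  ∃ o, IsInducedOrientation ms P o ∧ I = heightSet ms o

/- ## The quiver of a snake graph (0-indexed tiles) -/

/-- Arrow relation of the quiver `Q_G` (0-indexed: tile `i` here is tile `i+1` of the paper). -/
def quiverRel (ms : List Bool) (i j : ℕ) : Prop :=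
  (j = i + 1 ∧ i < ms.length ∧ (ms.getD i true = true ↔ Even i)) ∨
  (i = j + 1 ∧ j < ms.length ∧ ¬(ms.getD j true = true ↔ Even j))

def leQ (ms : List Bool) (i j : ℕ) : Prop :=
  i = j ∨ Relation.TransGen (quiverRel ms) i j

/-- Order ideals (downward closed subsets) of the poset of `Q_G`. -/
def IsOrderIdealQ (ms : List Bool) (I : Set ℕ) : Prop :=
  I ⊆ {t | t ≤ ms.length} ∧ ∀ x ∈ I, ∀ y, leQ ms y x → y ∈ I

/-- `P'` is obtained from `P` by a positive twist at tile `t` (0-indexed; paper's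
`j = t+1`, so paper's "`j` odd" is "`t` even"). -/
def PositiveTwist (ms : List Bool) (P P' : Finset Edge) (t : ℕ) : Prop :=
  t ≤ ms.length ∧
    ((Even t ∧ eN (tilePos ms t) ∈ P ∧ eS (tilePos ms t) ∈ P ∧
        P' = insert (eW (tilePos ms t)) (insert (eE (tilePos ms t))
          ((P.erase (eN (tilePos ms t))).erase (eS (tilePos ms t))))) ∨
      (¬Even t ∧ eW (tilePos ms t) ∈ P ∧ eE (tilePos ms t) ∈ P ∧
        P' = insert (eN (tilePos ms t)) (insert (eS (tilePos ms t))
          ((P.erase (eW (tilePos ms t))).erase (eE (tilePos ms t))))))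

/- ## Loop graphs -/

/-- The non-SW vertex of the boundary edge `c'` of tile `k` used for the loop at the first
tile (`c'` is the South or West edge of tile `k`, whichever is a boundary edge). -/
def startX' (ms : List Bool) (k : ℕ) : Vtx :=
  if ms.getD (k - 1) true then SEv (tilePos ms k) else NWv (tilePos ms k)

/-- The non-SW vertex of the chosen cut edge `c ∈ {S(G₁), W(G₁)}` (`b = true` means `c = S(G₁)`). -/
def startY (b : Bool) : Vtx := if b then (1, 0) else (0, 1)

/-- The identification map for a loop at the first tile, glued to tile `k`:
`x = (0,0) ↦ x'` and `y ↦ y' = tilePos ms k`. -/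
def startGlue (ms : List Bool) (k : ℕ) (b : Bool) : Vtx → Vtx := fun v =>
  if v = (0, 0) then startX' ms k else if v = startY b then tilePos ms k else v

def endX (ms : List Bool) : Vtx := NEv (tilePos ms ms.length)

/-- The non-NE vertex of the chosen cut edge `c ∈ {N(G_d), E(G_d)}` (`b = true` means `c = N(G_d)`). -/
def endY (ms : List Bool) (b : Bool) : Vtx :=
  if b then NWv (tilePos ms ms.length) else SEv (tilePos ms ms.length)

def endX' (ms : List Bool) (k : ℕ) : Vtx :=
  if ms.getD k true then NWv (tilePos ms k) else SEv (tilePos ms k)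

/-- The identification map for a loop at the last tile, glued to tile `k`. -/
def endGlue (ms : List Bool) (k : ℕ) (b : Bool) : Vtx → Vtx := fun v =>
  if v = endX ms then endX' ms k else if v = endY ms b then NEv (tilePos ms k) else v

/-- The quotient map of a loop graph with optional loops at each end,
each given by the index of the tile it is glued to and the choice of cut edge. -/
def loopMap (ms : List Bool) (L1 L2 : Option (ℕ × Bool)) : Vtx → Vtx :=
  (Option.elim L2 id fun kb => endGlue ms kb.1 kb.2) ∘
    (Option.elim L1 id fun kb => startGlue ms kb.1 kb.2)

def loopEdges (ms : List Bool) (q : Vtx → Vtx) : Finset Edge :=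
  (snakeEdges ms).image (Sym2.map q)

def loopVerts (ms : List Bool) (q : Vtx → Vtx) : Finset Vtx := (snakeVerts ms).image q

/-- A perfect matching of the loop graph with quotient map `q`. -/
def IsLoopPM (ms : List Bool) (q : Vtx → Vtx) (P : Finset Edge) : Prop :=
  P ⊆ loopEdges ms q ∧ ∀ v ∈ loopVerts ms q, ∃! e, e ∈ P ∧ v ∈ e

/-- `Q` is a perfect matching of the underlying snake graph extending
the matching `P` of the loop graph. -/
def ExtendsTo (ms : List Bool) (q : Vtx → Vtx) (Q P : Finset Edge) : Prop :=
  IsPerfectMatching ms Q ∧ Q.image (Sym2.map q) = P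

/-- A good matching: a perfect matching of the loop graph extendable to the snake graph. -/
def IsGoodMatching (ms : List Bool) (q : Vtx → Vtx) (P : Finset Edge) : Prop :=
  IsLoopPM ms q P ∧ ∃ Q, ExtendsTo ms q Q P

/-- The vertex `v` is matched in `P` by (the image of) a snake-graph edge at `v`
other than the cut-side edge `c`. -/
def SideMatched (ms : List Bool) (q : Vtx → Vtx) (P : Finset Edge) (v : Vtx) (c : Edge) : Prop :=
  ∃ e₀ ∈ snakeEdges ms, e₀ ≠ c ∧ v ∈ e₀ ∧ Sym2.map q e₀ ∈ P

/-- The height of a good matching of a loop graph, via an extension to the snake graph. -/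
def LoopHeightOf (ms : List Bool) (q : Vtx → Vtx) (P : Finset Edge) (I : Set ℕ) : Prop :=
  ∃ Q, ExtendsTo ms q Q P ∧ HeightOf ms Q I

/-- A perfect matching of an abstract simple graph, as a set of edges. -/
def IsPMSet {W : Type*} (G : SimpleGraph W) (P : Set (Sym2 W)) : Prop :=
  P ⊆ G.edgeSet ∧ ∀ v : W, ∃! e, e ∈ P ∧ v ∈ e

/-
The south-east corner `v` of the middle tile of the zig-zag lies on no other tile: the only
candidates are the tiles with south-west corner `v`, `v - (1,0)`, `v - (0,1)`, `v - (1,1)`,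
and since the coordinates of a tile sum to its index, these would have to be tiles `t + 1`,
`t`, `t` and `t - 1`, whose positions are pinned down by the zig-zag. So `S(G_k)` and `E(G_k)`
are the only edges at `v`, and a perfect matching covers `v` by exactly one of them.
-/

lemma tilePos_zero (ms : List Bool) : tilePos ms 0 = (0, 0) := by
  cases ms <;> simp [tilePos, positions, List.scanl]

lemma scanl_getD_succ (ms : List Bool) (p : Vtx) {i : ℕ} (hi : i < ms.length) :
    (ms.scanl mv p).getD (i + 1) (0, 0) = mv ((ms.scanl mv p).getD i (0, 0)) ms[i] := by
  induction ms generalizing p i with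
  | nil => simp at hi
  | cons m ms ih =>
    cases i with
    | zero => cases ms <;> simp [List.scanl]
    | succ i =>
      simp only [List.scanl_cons, List.getD_cons_succ, List.getElem_cons_succ]
      exact ih (mv p m) (by simpa using hi)

lemma tilePos_succ (ms : List Bool) {i : ℕ} (hi : i < ms.length) :
    tilePos ms (i + 1) = mv (tilePos ms i) ms[i] :=
  scanl_getD_succ ms _ hi

lemma tilePos_fst_add_snd (ms : List Bool) {i : ℕ} (hi : i ≤ ms.length) :
    (tilePos ms i).1 + (tilePos ms i).2 = i := by
  induction i with
  | zero => simp [tilePos_zero]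
  | succ i ih =>
    rw [tilePos_succ ms hi, mv]
    split <;> simp only [Nat.cast_succ] <;> linarith [ih (by omega)]

lemma length_positions (ms : List Bool) : (positions ms).length = ms.length + 1 :=
  List.length_scanl ..

lemma tilePos_mem_positions (ms : List Bool) {i : ℕ} (hi : i ≤ ms.length) :
    tilePos ms i ∈ positions ms := by
  have hi' : i < (positions ms).length := by rw [length_positions]; omega
  rw [tilePos, List.getD_eq_getElem _ _ hi']
  exact List.getElem_mem hi'

lemma tilePos_eq_of_mem_positions (ms : List Bool) {q : Vtx} (hq : q ∈ positions ms)
    {i : ℕ} (hsum : q.1 + q.2 = i) : tilePos ms i = q := by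
  obtain ⟨j, hj, rfl⟩ := List.getElem_of_mem hq
  have hj' : j ≤ ms.length := by rw [length_positions] at hj; omega
  have hpos : tilePos ms j = (positions ms)[j] := List.getD_eq_getElem _ _ hj
  rw [← hpos, tilePos_fst_add_snd ms hj'] at hsum
  rw [← hpos, show i = j by omega]

lemma mem_tileVerts_of_mem_tileEdges {p v : Vtx} {e : Edge} (he : e ∈ tileEdges p)
    (hv : v ∈ e) : v ∈ tileVerts p := by
  simp only [tileEdges, Finset.mem_insert, Finset.mem_singleton] at he
  rcases he with rfl | rfl | rfl | rfl <;>
    simp only [eS, eW, eN, eE, Sym2.mem_iff] at hv <;>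
    rcases hv with rfl | rfl <;> simp [tileVerts]

lemma mem_tileVerts_iff {p v : Vtx} :
    v ∈ tileVerts p ↔ p = v ∨ p = (v.1 - 1, v.2) ∨ p = (v.1, v.2 - 1) ∨
      p = (v.1 - 1, v.2 - 1) := by
  obtain ⟨a, b⟩ := p
  obtain ⟨x, y⟩ := v
  simp only [tileVerts, Finset.mem_insert, Finset.mem_singleton, Prod.mk.injEq]
  omega

lemma eq_eS_or_eE_of_SEv_mem {p : Vtx} {e : Edge} (he : e ∈ tileEdges p) (hv : SEv p ∈ e) :
    e = eS p ∨ e = eE p := by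
  simp only [tileEdges, Finset.mem_insert, Finset.mem_singleton] at he
  rcases he with rfl | rfl | rfl | rfl
  · exact Or.inl rfl
  · simp [eW, SEv, Prod.ext_iff] at hv
  · simp [eN, SEv, Prod.ext_iff] at hv
  · exact Or.inr rfl

lemma eS_ne_eE (p : Vtx) : eS p ≠ eE p := by
  simp [eS, eE, Prod.ext_iff]

lemma IsPerfectMatching.xor_of_edges_at {ms : List Bool} {P : Finset Edge}
    (hP : IsPerfectMatching ms P) {v : Vtx} (hv : v ∈ snakeVerts ms) {e f : Edge}
    (hef : e ≠ f) (he : v ∈ e) (hf : v ∈ f)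
    (hedges : ∀ g ∈ snakeEdges ms, v ∈ g → g = e ∨ g = f) : Xor' (e ∈ P) (f ∈ P) := by
  obtain ⟨g, ⟨hgP, hvg⟩, huniq⟩ := hP.2 v hv
  rcases hedges g (hP.1 hgP) hvg with rfl | rfl
  · exact Or.inl ⟨hgP, fun hfP => hef (huniq f ⟨hfP, hf⟩).symm⟩
  · exact Or.inr ⟨hgP, fun heP => hef (huniq e ⟨heP, he⟩)⟩

section Zigzag

variable (ms : List Bool) {t : ℕ} (h1 : 1 ≤ t) (h2 : t < ms.length)
  (hr : ms.getD (t - 1) false = true) (hu : ms.getD t true = false)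
include h1 h2 hr hu

lemma tilePos_eq_of_zigzag :
    tilePos ms (t - 1) = ((tilePos ms t).1 - 1, (tilePos ms t).2) ∧
      tilePos ms (t + 1) = ((tilePos ms t).1, (tilePos ms t).2 + 1) := by
  have hprev := tilePos_succ ms (i := t - 1) (by omega)
  have hnext := tilePos_succ ms h2
  rw [List.getD_eq_getElem _ _ (by omega)] at hr hu
  rw [Nat.sub_add_cancel h1, hr, mv] at hprev
  rw [hu, mv] at hnext
  refine ⟨?_, hnext⟩
  simp only [if_true] at hprev
  simp [hprev]

lemma tile_eq_of_SEv_mem_zigzag {q : Vtx} (hq : q ∈ positions ms)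
    (hv : SEv (tilePos ms t) ∈ tileVerts q) : q = tilePos ms t := by
  obtain ⟨hprev, hnext⟩ := tilePos_eq_of_zigzag ms h1 h2 hr hu
  have hsum := tilePos_fst_add_snd ms h2.le
  have hindex (i : ℕ) (h : q.1 + q.2 = i) := tilePos_eq_of_mem_positions ms hq h
  rw [mem_tileVerts_iff] at hv
  simp only [SEv] at hv
  rcases hv with rfl | rfl | rfl | rfl
  · have := hindex (t + 1) (by push_cast; linarith)
    simp [hnext, Prod.ext_iff] at this
  · simp
  · have := hindex t (by simp only; linarith)
    simp [Prod.ext_iff] at this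
  · have := hindex (t - 1) (by push_cast [h1]; linarith)
    simp [hprev, Prod.ext_iff] at this

lemma eq_eS_or_eE_of_SEv_mem_snakeEdges_zigzag {e : Edge} (he : e ∈ snakeEdges ms)
    (hv : SEv (tilePos ms t) ∈ e) : e = eS (tilePos ms t) ∨ e = eE (tilePos ms t) := by
  obtain ⟨q, hq, heq⟩ := Finset.mem_biUnion.1 he
  have hqp := tile_eq_of_SEv_mem_zigzag ms h1 h2 hr hu (List.mem_toFinset.1 hq)
    (mem_tileVerts_of_mem_tileEdges heq hv)
  exact eq_eS_or_eE_of_SEv_mem (hqp ▸ heq) hv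

end Zigzag

/-- if tiles `(G_{k-1}, G_k, G_{k+1})` form a zig-zag with `G_k` to the right
of `G_{k-1}` and `G_{k+1}` on top of `G_k` (so `E(G_k)` and `S(G_k)` are boundary edges),
then every perfect matching contains exactly one of `E(G_k)`, `S(G_k)`.
(Tile `t` here is the paper's tile `k = t + 1`, 0-indexed.) -/
theorem statement8 (ms : List Bool) (t : ℕ) (h1 : 1 ≤ t) (h2 : t < ms.length)
    (hr : ms.getD (t - 1) false = true) (hu : ms.getD t true = false)
    (P : Finset Edge) (hP : IsPerfectMatching ms P) :
    Xor' (eE (tilePos ms t) ∈ P) (eS (tilePos ms t) ∈ P) := by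
  have hv : SEv (tilePos ms t) ∈ snakeVerts ms :=
    Finset.mem_biUnion.2 ⟨_, List.mem_toFinset.2 (tilePos_mem_positions ms h2.le),
      by simp [tileVerts, SEv]⟩
  refine hP.xor_of_edges_at hv (eS_ne_eE _).symm (by simp [eE, SEv]) (by simp [eS, SEv]) ?_
  exact fun e he hve => (eq_eS_or_eE_of_SEv_mem_snakeEdges_zigzag ms h1 h2 hr hu he hve).symm
end

section
/- For any snake graph G = (G_1, ..., G_d), the map sending a perfect matching P to its height h(P) is a bijection between the set of perfect matchings of G and the set of order ideals of the poset determined by the quiver Q_G; moreover this bijection carries the covering relation 'P' is obtained from P by a positive twist at tile G_j' to the relation 'h(P') = h(P) ∪ {j} with j not in h(P)'. -/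
/-!
Call `x + y` the level of a vertex `(x, y)`; the SW corner of tile `t` has level `t`. Every edge
joins consecutive levels; level `0` is the SW corner of the first tile, level `t + 1` consists of
the NW and SE corners of tile `t`, and the top level is the NE corner of the last tile. Hence a
perfect matching has exactly one edge between levels `k` and `k + 1` for each `k`, and these edges
form the alternating walk through the diagonals, so the orientation of the diagonals is read off
from the matching level by level. Conversely an orientation yields a perfect matching iff at each
gluing of two tiles one of the two diagonals points at the shared edge, and this local condition is
exactly the closure of the set of positive diagonals under the arrows of `Q_G`. A positive twist at
tile `t` reverses the diagonal of tile `t` only, so it adds `t` to the height.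
-/

namespace SnakeGraph

open Function

variable {ms : List Bool} {o o' : ℕ → Bool} {P : Finset Edge} {t k : ℕ}

def level (v : Vtx) : ℤ := v.1 + v.2

@[simp] lemma level_mk (a b : ℤ) : level (a, b) = a + b := rfl

@[simp] lemma level_mv (p : Vtx) (m : Bool) : level (mv p m) = level p + 1 := by
  cases m <;> simp [mv, level] <;> ring

@[simp] lemma level_NWv (p : Vtx) : level (NWv p) = level p + 1 := by simp [level, NWv]; ring
@[simp] lemma level_SEv (p : Vtx) : level (SEv p) = level p + 1 := by simp [level, SEv]; ring
@[simp] lemma level_NEv (p : Vtx) : level (NEv p) = level p + 2 := by simp [level, NEv]; ring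

lemma NWv_ne_SEv (p : Vtx) : NWv p ≠ SEv p := by
  simp [NWv, SEv, Prod.ext_iff]

lemma tilePos_zero (ms : List Bool) : tilePos ms 0 = (0, 0) := by
  simp [tilePos, positions]

lemma tilePos_succ (ht : t < ms.length) :
    tilePos ms (t + 1) = mv (tilePos ms t) (ms.getD t true) := by
  have h1 : t + 1 ≤ ms.length := ht
  simp only [tilePos, positions, List.getD_eq_getElem?_getD, List.getElem?_scanl, if_pos h1,
    if_pos ht.le, List.take_add_one, List.getElem?_eq_getElem ht, List.foldl_append]
  simp

lemma level_tilePos (ht : t ≤ ms.length) : level (tilePos ms t) = t := by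
  induction t with
  | zero => simp [tilePos_zero]
  | succ t ih =>
    rw [tilePos_succ (by omega), level_mv, ih (by omega)]
    push_cast; ring

lemma tilePos_succ_eq_ite (ht : t < ms.length) :
    tilePos ms (t + 1) = if ms.getD t true then SEv (tilePos ms t) else NWv (tilePos ms t) := by
  rw [tilePos_succ ht]; cases ms.getD t true <;> rfl

lemma NEv_eq_ite (ht : t < ms.length) :
    NEv (tilePos ms t) =
      if ms.getD t true then NWv (tilePos ms (t + 1)) else SEv (tilePos ms (t + 1)) := by
  rw [tilePos_succ ht]; cases ms.getD t true <;> rfl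

lemma mem_positions {p : Vtx} : p ∈ positions ms ↔ ∃ t ≤ ms.length, tilePos ms t = p := by
  have hlen : (positions ms).length = ms.length + 1 := List.length_scanl
  simp only [List.mem_iff_getElem, tilePos, List.getD_eq_getElem?_getD, hlen]
  constructor
  · rintro ⟨t, ht, rfl⟩
    exact ⟨t, by omega, by simp [List.getElem?_eq_getElem (hlen ▸ ht : t < (positions ms).length)]⟩
  · rintro ⟨t, ht, rfl⟩
    exact ⟨t, by omega, by simp [List.getElem?_eq_getElem (by omega : t < (positions ms).length)]⟩

lemma mem_snakeVerts {v : Vtx} :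
    v ∈ snakeVerts ms ↔ ∃ t ≤ ms.length, v ∈ tileVerts (tilePos ms t) := by
  simp only [snakeVerts, Finset.mem_biUnion, List.mem_toFinset, mem_positions]
  constructor
  · rintro ⟨_, ⟨t, ht, rfl⟩, hv⟩; exact ⟨t, ht, hv⟩
  · rintro ⟨t, ht, hv⟩; exact ⟨_, ⟨t, ht, rfl⟩, hv⟩

lemma mem_snakeEdges {e : Edge} :
    e ∈ snakeEdges ms ↔ ∃ t ≤ ms.length, e ∈ tileEdges (tilePos ms t) := by
  simp only [snakeEdges, Finset.mem_biUnion, List.mem_toFinset, mem_positions]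
  constructor
  · rintro ⟨_, ⟨t, ht, rfl⟩, he⟩; exact ⟨t, ht, he⟩
  · rintro ⟨t, ht, he⟩; exact ⟨_, ⟨t, ht, rfl⟩, he⟩

lemma mem_tileVerts {v p : Vtx} :
    v ∈ tileVerts p ↔ v = p ∨ v = SEv p ∨ v = NWv p ∨ v = NEv p := by
  simp [tileVerts, SEv, NWv, NEv]

lemma mem_tileEdges {e : Edge} {p : Vtx} :
    e ∈ tileEdges p ↔ e = eS p ∨ e = eW p ∨ e = eN p ∨ e = eE p := by
  simp [tileEdges]

lemma mem_snakeVerts_iff {v : Vtx} :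
    v ∈ snakeVerts ms ↔ v = (0, 0) ∨ v = NEv (tilePos ms ms.length) ∨
      ∃ t ≤ ms.length, v = NWv (tilePos ms t) ∨ v = SEv (tilePos ms t) := by
  rw [mem_snakeVerts]
  constructor
  · rintro ⟨t, ht, hv⟩
    rcases mem_tileVerts.1 hv with rfl | rfl | rfl | rfl
    · cases t with
      | zero => exact Or.inl (tilePos_zero ms)
      | succ s =>
        refine Or.inr (Or.inr ⟨s, by omega, ?_⟩)
        rw [tilePos_succ_eq_ite (by omega)]
        split <;> simp
    · exact Or.inr (Or.inr ⟨t, ht, Or.inr rfl⟩)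
    · exact Or.inr (Or.inr ⟨t, ht, Or.inl rfl⟩)
    · rcases ht.eq_or_lt with rfl | ht'
      · exact Or.inr (Or.inl rfl)
      · refine Or.inr (Or.inr ⟨t + 1, ht', ?_⟩)
        rw [NEv_eq_ite ht']
        split <;> simp
  · rintro (rfl | rfl | ⟨t, ht, rfl | rfl⟩)
    · exact ⟨0, by omega, mem_tileVerts.2 (Or.inl (tilePos_zero ms).symm)⟩
    · exact ⟨ms.length, le_rfl, mem_tileVerts.2 (by tauto)⟩
    · exact ⟨t, ht, mem_tileVerts.2 (by tauto)⟩
    · exact ⟨t, ht, mem_tileVerts.2 (by tauto)⟩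

lemma exists_eq_of_mem_snakeEdges {e : Edge} (he : e ∈ snakeEdges ms) :
    ∃ a : Vtx, e = s(a, (a.1 + 1, a.2)) ∨ e = s(a, (a.1, a.2 + 1)) := by
  obtain ⟨t, -, h⟩ := mem_snakeEdges.1 he
  rcases mem_tileEdges.1 h with rfl | rfl | rfl | rfl
  exacts [⟨_, Or.inl rfl⟩, ⟨_, Or.inr rfl⟩, ⟨_, Or.inl rfl⟩, ⟨_, Or.inr rfl⟩]

lemma level_of_mem_snakeEdges {v w : Vtx} (h : s(v, w) ∈ snakeEdges ms) :
    level w = level v + 1 ∨ level v = level w + 1 := by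
  obtain ⟨a, ha | ha⟩ := exists_eq_of_mem_snakeEdges h <;>
    rcases Sym2.eq_iff.1 ha with ⟨rfl, rfl⟩ | ⟨rfl, rfl⟩ <;> simp [level] <;> omega

lemma mem_snakeVerts_of_mem {e : Edge} {v : Vtx} (he : e ∈ snakeEdges ms) (hv : v ∈ e) :
    v ∈ snakeVerts ms := by
  obtain ⟨t, ht, h⟩ := mem_snakeEdges.1 he
  refine mem_snakeVerts.2 ⟨t, ht, mem_tileVerts.2 ?_⟩
  rcases mem_tileEdges.1 h with rfl | rfl | rfl | rfl <;>
    simp only [eS, eW, eN, eE, Sym2.mem_iff] at hv <;> simp [SEv, NWv, NEv] <;> tauto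

def walkStart (ms : List Bool) (o : ℕ → Bool) : ℕ → Vtx
  | 0 => (0, 0)
  | t + 1 => diagOut ms o t

def walkEnd (ms : List Bool) (o : ℕ → Bool) (k : ℕ) : Vtx :=
  if k ≤ ms.length then diagIn ms o k else NEv (tilePos ms ms.length)

def walkEdge (ms : List Bool) (o : ℕ → Bool) (k : ℕ) : Edge :=
  s(walkStart ms o k, walkEnd ms o k)

lemma walkEdgeList_eq_map (ms : List Bool) (o : ℕ → Bool) :
    walkEdgeList ms o = (List.range (ms.length + 2)).map (walkEdge ms o) := by
  rw [walkEdgeList, List.range_succ_eq_map, List.range_succ, List.map_cons, List.map_map,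
    List.map_append, List.map_singleton, List.cons_append]
  congr 2
  · refine List.map_congr_left fun t ht => ?_
    simp [walkEdge, walkStart, walkEnd, List.mem_range.1 ht]
  · simp [walkEdge, walkStart, walkEnd]

lemma mem_walkEdgeSet {e : Edge} :
    e ∈ (walkEdgeList ms o).toFinset ↔ ∃ k ≤ ms.length + 1, walkEdge ms o k = e := by
  simp [walkEdgeList_eq_map, Nat.lt_succ_iff]

lemma walkEdge_mem_walkEdgeSet (hk : k ≤ ms.length + 1) :
    walkEdge ms o k ∈ (walkEdgeList ms o).toFinset :=
  mem_walkEdgeSet.2 ⟨k, hk, rfl⟩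

lemma level_diagIn (ht : t ≤ ms.length) : level (diagIn ms o t) = t + 1 := by
  unfold diagIn; split <;> simp [level_tilePos ht]

lemma level_diagOut (ht : t ≤ ms.length) : level (diagOut ms o t) = t + 1 := by
  unfold diagOut; split <;> simp [level_tilePos ht]

lemma diagIn_ne_diagOut (ms : List Bool) (o : ℕ → Bool) (t : ℕ) :
    diagIn ms o t ≠ diagOut ms o t := by
  unfold diagIn diagOut; split
  exacts [NWv_ne_SEv _, (NWv_ne_SEv _).symm]

lemma level_walkStart (hk : k ≤ ms.length + 1) : level (walkStart ms o k) = k := by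
  cases k with
  | zero => rfl
  | succ t => simp [walkStart, level_diagOut (by omega : t ≤ ms.length)]

lemma level_walkEnd (hk : k ≤ ms.length + 1) : level (walkEnd ms o k) = k + 1 := by
  unfold walkEnd; split
  · exact level_diagIn ‹_›
  · obtain rfl : k = ms.length + 1 := by omega
    simp [level_tilePos le_rfl]; ring

lemma walkEnd_ne_walkStart_succ (hk : k ≤ ms.length) :
    walkEnd ms o k ≠ walkStart ms o (k + 1) := by
  simpa [walkEnd, walkStart, hk] using diagIn_ne_diagOut ms o k

lemma level_of_mem_walkEdge {v : Vtx} (hk : k ≤ ms.length + 1) (hv : v ∈ walkEdge ms o k) :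
    level v = k ∨ level v = k + 1 := by
  rcases Sym2.mem_iff.1 hv with rfl | rfl
  exacts [Or.inl (level_walkStart hk), Or.inr (level_walkEnd hk)]

lemma eq_of_mem_walkEdge {v : Vtx} {k' : ℕ} (hk : k ≤ ms.length + 1) (hk' : k' ≤ ms.length + 1)
    (hv : v ∈ walkEdge ms o k) (hv' : v ∈ walkEdge ms o k') : k = k' := by
  rcases Sym2.mem_iff.1 hv with rfl | rfl <;> rcases Sym2.mem_iff.1 hv' with h | h
  · have := level_walkStart (o := o) hk; rw [h, level_walkStart hk'] at this; omega
  · have := level_walkStart (o := o) hk; rw [h, level_walkEnd hk'] at this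
    obtain rfl : k = k' + 1 := by omega
    exact absurd h.symm (walkEnd_ne_walkStart_succ (by omega))
  · have := level_walkEnd (o := o) hk; rw [h, level_walkStart hk'] at this
    obtain rfl : k' = k + 1 := by omega
    exact absurd h (walkEnd_ne_walkStart_succ (by omega))
  · have := level_walkEnd (o := o) hk; rw [h, level_walkEnd hk'] at this; omega

lemma walkEdge_inj {k' : ℕ} (hk : k ≤ ms.length + 1) (hk' : k' ≤ ms.length + 1) :
    walkEdge ms o k = walkEdge ms o k' ↔ k = k' :=
  ⟨fun h => eq_of_mem_walkEdge hk hk' (Sym2.mem_mk_left _ _)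
    (by rw [← h]; exact Sym2.mem_mk_left _ _), congrArg _⟩

lemma walkEdgeList_nodup (ms : List Bool) (o : ℕ → Bool) : (walkEdgeList ms o).Nodup := by
  rw [walkEdgeList_eq_map]
  refine List.nodup_range.map_on fun k hk k' hk' h => ?_
  simp only [List.mem_range] at hk hk'
  exact (walkEdge_inj (by omega) (by omega)).1 h

lemma exists_mem_walkEdge {v : Vtx} (hv : v ∈ snakeVerts ms) :
    ∃ k ≤ ms.length + 1, v ∈ walkEdge ms o k := by
  rcases mem_snakeVerts_iff.1 hv with rfl | rfl | ⟨t, ht, hv⟩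
  · exact ⟨0, by omega, Sym2.mem_mk_left _ _⟩
  · exact ⟨ms.length + 1, le_rfl, by simp [walkEdge, walkEnd]⟩
  · have : v = diagIn ms o t ∨ v = diagOut ms o t := by
      unfold diagIn diagOut; split <;> tauto
    rcases this with rfl | rfl
    · exact ⟨t, by omega, by simp [walkEdge, walkEnd, ht]⟩
    · exact ⟨t + 1, by omega, Sym2.mem_mk_left _ _⟩

lemma walkStart_walkEnd_of_mem {x y : Vtx} (h : s(x, y) ∈ (walkEdgeList ms o).toFinset)
    (hx : level x = k) (hy : level y = k + 1) :
    walkStart ms o k = x ∧ walkEnd ms o k = y := by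
  obtain ⟨k', hk', he⟩ := mem_walkEdgeSet.1 h
  have h1 := level_of_mem_walkEdge hk' (he ▸ Sym2.mem_mk_left x y)
  have h2 := level_of_mem_walkEdge hk' (he ▸ Sym2.mem_mk_right x y)
  obtain rfl : k' = k := by omega
  rcases Sym2.eq_iff.1 he with h | ⟨h, -⟩
  · exact h
  · have := level_walkStart (o := o) hk'; rw [h, hy] at this; omega

/-- The step of the walk from tile `t` to tile `t + 1` joins `diagOut t` to `diagIn (t + 1)`; it is
an edge of the snake graph iff one of these two vertices lies on the edge shared by the tiles. -/
def Admissible (ms : List Bool) (o : ℕ → Bool) : Prop :=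
  ∀ t < ms.length, o t = ms.getD t true ∨ o (t + 1) = ms.getD t true

lemma diagOut_diagIn_succ_mem_snakeEdges (ht : t < ms.length)
    (h : o t = ms.getD t true ∨ o (t + 1) = ms.getD t true) :
    s(diagOut ms o t, diagIn ms o (t + 1)) ∈ snakeEdges ms := by
  suffices s(diagOut ms o t, diagIn ms o (t + 1)) ∈ tileEdges (tilePos ms t) ∨
      s(diagOut ms o t, diagIn ms o (t + 1)) ∈ tileEdges (tilePos ms (t + 1)) by
    rcases this with h | h
    exacts [mem_snakeEdges.2 ⟨t, ht.le, h⟩, mem_snakeEdges.2 ⟨t + 1, ht, h⟩]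
  simp only [diagIn, diagOut, tilePos_succ ht] at h ⊢
  generalize o t = a, o (t + 1) = b, ms.getD t true = m, tilePos ms t = p at h ⊢
  cases a <;> cases b <;> cases m <;>
    simp_all [mv, tileEdges, eS, eW, eN, eE, NWv, SEv]

lemma walkEdge_mem_snakeEdges (h : Admissible ms o) (hk : k ≤ ms.length + 1) :
    walkEdge ms o k ∈ snakeEdges ms := by
  rcases k with _ | t
  · refine mem_snakeEdges.2 ⟨0, by omega, ?_⟩
    simp only [walkEdge, walkStart, walkEnd, diagIn, tilePos_zero, zero_le, if_true]
    split <;> simp [tileEdges, eW, eS, NWv, SEv]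
  · rcases (by omega : t < ms.length ∨ t = ms.length) with ht | rfl
    · simpa [walkEdge, walkStart, walkEnd, ht] using
        diagOut_diagIn_succ_mem_snakeEdges ht (h t ht)
    · refine mem_snakeEdges.2 ⟨ms.length, le_rfl, ?_⟩
      simp only [walkEdge, walkStart, walkEnd, diagOut, add_le_iff_nonpos_right]
      split <;> simp [tileEdges, eN, eE, NWv, SEv, NEv]

lemma isPerfectMatching_walkEdgeSet (h : Admissible ms o) :
    IsPerfectMatching ms (walkEdgeList ms o).toFinset := by
  refine ⟨fun e he => ?_, fun v hv => ?_⟩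
  · obtain ⟨k, hk, rfl⟩ := mem_walkEdgeSet.1 he
    exact walkEdge_mem_snakeEdges h hk
  · obtain ⟨k, hk, hvk⟩ := exists_mem_walkEdge (o := o) hv
    refine ⟨walkEdge ms o k, ⟨walkEdge_mem_walkEdgeSet hk, hvk⟩, ?_⟩
    rintro e ⟨he, hve⟩
    obtain ⟨k', hk', rfl⟩ := mem_walkEdgeSet.1 he
    rw [eq_of_mem_walkEdge hk' hk hve hvk]

lemma admissible_of_subset (h : (walkEdgeList ms o).toFinset ⊆ snakeEdges ms) :
    Admissible ms o := by
  intro t ht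
  by_contra! hne
  obtain ⟨u, hu⟩ := exists_eq_of_mem_snakeEdges (h (walkEdge_mem_walkEdgeSet (o := o)
    (k := t + 1) (by omega)))
  simp only [walkEdge, walkStart, walkEnd, diagIn, diagOut, tilePos_succ ht,
    (by omega : t + 1 ≤ ms.length), if_true] at hu
  generalize o t = a, o (t + 1) = b, ms.getD t true = m, tilePos ms t = p at hu hne
  cases a <;> cases b <;> cases m <;> simp_all [mv, NWv, SEv, Prod.ext_iff] <;> omega

lemma diagIn_eq_diagIn_iff : diagIn ms o t = diagIn ms o' t ↔ o t = o' t := by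
  unfold diagIn
  cases o t <;> cases o' t <;> simp [NWv_ne_SEv, (NWv_ne_SEv _).symm]

lemma walkEdge_congr (h₁ : ∀ j, j + 1 = k → o j = o' j) (h₂ : k ≤ ms.length → o k = o' k) :
    walkEdge ms o k = walkEdge ms o' k := by
  unfold walkEdge walkEnd
  congr 1
  · rcases k with _ | t
    · rfl
    · simp only [walkStart, diagOut, h₁ t rfl]
  · split
    · simp only [diagIn, h₂ ‹_›]
    · rfl

lemma walkEdgeSet_eq_iff :
    (walkEdgeList ms o).toFinset = (walkEdgeList ms o').toFinset ↔
      ∀ t ≤ ms.length, o t = o' t := by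
  refine ⟨fun h t ht => ?_, fun h => ?_⟩
  · have hmem := h ▸ walkEdge_mem_walkEdgeSet (ms := ms) (o := o) (k := t) (by omega)
    have := (walkStart_walkEnd_of_mem hmem (level_walkStart (by omega))
      (level_walkEnd (by omega))).2
    simpa [walkEnd, ht, diagIn_eq_diagIn_iff, eq_comm] using this
  · rw [walkEdgeList_eq_map, walkEdgeList_eq_map]
    congr 1
    refine List.map_congr_left fun k hk => walkEdge_congr (fun j hj => h j ?_) (h k)
    simp only [List.mem_range] at hk
    omega

lemma heightSet_eq_iff : heightSet ms o = heightSet ms o' ↔ ∀ t ≤ ms.length, o t = o' t := by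
  simp only [Set.ext_iff, heightSet, Set.mem_ofPred_eq]
  refine ⟨fun h t ht => ?_, fun h t => ?_⟩
  · have := h t
    by_cases he : Even t <;> cases ha : o t <;> cases hb : o' t <;> simp_all
  · exact and_congr_right fun ht => by rw [h t ht]

open Classical in
noncomputable def orientationOfHeight (I : Set ℕ) (t : ℕ) : Bool := decide (t ∈ I ↔ Even t)

lemma heightSet_orientationOfHeight {I : Set ℕ} (hI : I ⊆ {t | t ≤ ms.length}) :
    heightSet ms (orientationOfHeight I) = I := by
  ext t
  simp only [heightSet, orientationOfHeight, Set.mem_ofPred_eq, decide_eq_true_iff]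
  exact ⟨fun h => by tauto, fun h => ⟨hI h, by tauto⟩⟩

lemma isOrderIdealQ_iff {I : Set ℕ} :
    IsOrderIdealQ ms I ↔
      I ⊆ {t | t ≤ ms.length} ∧ ∀ a b, quiverRel ms a b → b ∈ I → a ∈ I := by
  refine and_congr_right fun _ => ⟨fun h a b hab hb => h b hb a (Or.inr (.single hab)), ?_⟩
  rintro h x hx y (rfl | hyx)
  · exact hx
  · induction hyx using Relation.TransGen.head_induction_on with
    | single hab => exact h _ _ hab hx
    | head hab _ ih => exact h _ _ hab ih

lemma isOrderIdealQ_heightSet_iff : IsOrderIdealQ ms (heightSet ms o) ↔ Admissible ms o := by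
  rw [isOrderIdealQ_iff]
  simp only [show heightSet ms o ⊆ {t | t ≤ ms.length} from fun t ht => ht.1, true_and]
  constructor
  · intro h t ht
    have hup := fun hm => h t (t + 1) (Or.inl ⟨rfl, ht, hm⟩)
    have hdown := fun hm => h (t + 1) t (Or.inr ⟨rfl, ht, hm⟩)
    clear h
    by_cases he : Even t <;>
      simp only [heightSet, Set.mem_ofPred_eq, Nat.even_add_one, he] at hup hdown <;>
      generalize o t = a, o (t + 1) = b, ms.getD t true = m at hup hdown ⊢ <;>
      cases a <;> cases b <;> cases m <;> simp_all <;> omega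
  · rintro h a b (⟨rfl, ht, hm⟩ | ⟨rfl, ht, hm⟩) hmem <;> have := h _ ht <;>
      refine ⟨by omega, ?_⟩ <;> replace hmem := hmem.2
    · by_cases he : Even a <;>
        simp only [Nat.even_add_one, he] at hmem hm ⊢ <;>
        generalize o a = x, o (a + 1) = y, ms.getD a true = m at this hm hmem ⊢ <;>
        cases x <;> cases y <;> cases m <;> simp_all
    · by_cases he : Even b <;>
        simp only [Nat.even_add_one, he] at hmem hm ⊢ <;>
        generalize o b = x, o (b + 1) = y, ms.getD b true = m at this hm hmem ⊢ <;>
        cases x <;> cases y <;> cases m <;> simp_all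

lemma walkStart_mem_snakeVerts (hk : k ≤ ms.length + 1) : walkStart ms o k ∈ snakeVerts ms := by
  rw [mem_snakeVerts_iff]
  rcases k with _ | t
  · exact Or.inl rfl
  · refine Or.inr (Or.inr ⟨t, by omega, ?_⟩)
    simp only [walkStart, diagOut]
    split <;> simp

lemma eq_NWv_or_SEv_of_level {w : Vtx} (hw : w ∈ snakeVerts ms) (hk : k ≤ ms.length)
    (hl : level w = k + 1) : w = NWv (tilePos ms k) ∨ w = SEv (tilePos ms k) := by
  rcases mem_snakeVerts_iff.1 hw with rfl | rfl | ⟨t, ht, h⟩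
  · simp at hl; omega
  · simp [level_tilePos le_rfl] at hl; omega
  · obtain rfl : t = k := by
      rcases h with rfl | rfl <;> simp [level_tilePos ht] at hl <;> omega
    exact h

lemma eq_NEv_of_level {w : Vtx} (hw : w ∈ snakeVerts ms) (hl : level w = ms.length + 2) :
    w = NEv (tilePos ms ms.length) := by
  rcases mem_snakeVerts_iff.1 hw with rfl | rfl | ⟨t, ht, h | h⟩
  · simp at hl; omega
  · rfl
  all_goals rw [h] at hl; simp [level_tilePos ht] at hl; omega

/-- The lower neighbours of `walkStart k` are already covered by the earlier edges of the walk. -/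
lemma level_partner (hP : IsPerfectMatching ms P) (hk : k ≤ ms.length + 1)
    (hprev : ∀ j < k, walkEdge ms o j ∈ P) {w : Vtx} (h : s(walkStart ms o k, w) ∈ P) :
    level w = k + 1 := by
  rcases level_of_mem_snakeEdges (hP.1 h) with hl | hl
  · rwa [level_walkStart hk] at hl
  exfalso
  have hw : w ∈ snakeVerts ms := mem_snakeVerts_of_mem (hP.1 h) (Sym2.mem_mk_right _ _)
  obtain ⟨j, hj, hwj⟩ := exists_mem_walkEdge (o := o) hw
  have hjk : j < k := by
    have := level_of_mem_walkEdge hj hwj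
    rw [level_walkStart hk] at hl
    omega
  have he : s(walkStart ms o k, w) = walkEdge ms o j :=
    (hP.2 w hw).unique ⟨h, Sym2.mem_mk_right _ _⟩ ⟨hprev j hjk, hwj⟩
  have := eq_of_mem_walkEdge hj hk (he ▸ Sym2.mem_mk_left _ _) (Sym2.mem_mk_left _ _)
  omega

/-- `orientationOf ms P t` records whether the matched edge at `walkStart t` goes to the NW corner
of tile `t` (see `orientationOf_eq`); `diagOut` is written out to make the recursion structural. -/
def orientationOf (ms : List Bool) (P : Finset Edge) : ℕ → Bool
  | 0 => decide (s((0, 0), NWv (tilePos ms 0)) ∈ P)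
  | t + 1 => decide (s(if orientationOf ms P t then SEv (tilePos ms t) else NWv (tilePos ms t),
      NWv (tilePos ms (t + 1))) ∈ P)

lemma orientationOf_eq (k : ℕ) : orientationOf ms P k =
    decide (s(walkStart ms (orientationOf ms P) k, NWv (tilePos ms k)) ∈ P) := by
  cases k <;> rfl

lemma walkEdge_orientationOf_mem (hP : IsPerfectMatching ms P) (hk : k ≤ ms.length + 1) :
    walkEdge ms (orientationOf ms P) k ∈ P := by
  induction k using Nat.strong_induction_on with
  | _ k ih =>
    have hv := walkStart_mem_snakeVerts (o := orientationOf ms P) hk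
    obtain ⟨e, ⟨he, hve⟩, -⟩ := hP.2 _ hv
    obtain ⟨w, rfl⟩ := Sym2.mem_iff_exists.1 hve
    have hl := level_partner hP hk (fun j hj => ih j hj (by omega)) he
    have hw : w ∈ snakeVerts ms := mem_snakeVerts_of_mem (hP.1 he) (Sym2.mem_mk_right _ _)
    rcases (by omega : k ≤ ms.length ∨ k = ms.length + 1) with hk' | rfl
    · rcases eq_NWv_or_SEv_of_level hw hk' hl with rfl | rfl
      · have ho : orientationOf ms P k = true := by rw [orientationOf_eq]; exact decide_eq_true he
        simpa [walkEdge, walkEnd, hk', diagIn, ho] using he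
      · have ho : orientationOf ms P k = false := by
          rw [orientationOf_eq]
          refine decide_eq_false fun hNW => NWv_ne_SEv (tilePos ms k) ?_
          exact Sym2.congr_right.1 ((hP.2 _ hv).unique ⟨hNW, Sym2.mem_mk_left _ _⟩
            ⟨he, Sym2.mem_mk_left _ _⟩)
        simpa [walkEdge, walkEnd, hk', diagIn, ho] using he
    · rw [eq_NEv_of_level hw (by omega)] at he
      simpa [walkEdge, walkEnd] using he

lemma eq_walkEdgeSet_of_forall_mem (hP : IsPerfectMatching ms P)
    (h : ∀ k ≤ ms.length + 1, walkEdge ms o k ∈ P) : P = (walkEdgeList ms o).toFinset := by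
  ext e
  refine ⟨fun he => ?_, fun he => ?_⟩
  · induction e using Sym2.ind with
    | h a b =>
      have ha := mem_snakeVerts_of_mem (hP.1 he) (Sym2.mem_mk_left a b)
      obtain ⟨k, hk, hak⟩ := exists_mem_walkEdge (o := o) ha
      rw [(hP.2 a ha).unique ⟨he, Sym2.mem_mk_left a b⟩ ⟨h k hk, hak⟩]
      exact walkEdge_mem_walkEdgeSet hk
  · obtain ⟨k, hk, rfl⟩ := mem_walkEdgeSet.1 he
    exact h k hk

lemma isInducedOrientation_orientationOf (hP : IsPerfectMatching ms P) :
    IsInducedOrientation ms P (orientationOf ms P) :=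
  ⟨walkEdgeList_nodup ms _,
    eq_walkEdgeSet_of_forall_mem hP fun _ hk => walkEdge_orientationOf_mem hP hk⟩

lemma diagIn_update_self : diagIn ms (update o t (!o t)) t = diagOut ms o t := by
  cases h : o t <;> simp [diagIn, diagOut, h]

lemma diagOut_update_self : diagOut ms (update o t (!o t)) t = diagIn ms o t := by
  cases h : o t <;> simp [diagIn, diagOut, h]

lemma walkEdge_update_self (ht : t ≤ ms.length) :
    walkEdge ms (update o t (!o t)) t = s(walkStart ms o t, diagOut ms o t) := by
  rw [walkEdge, walkEnd, if_pos ht, diagIn_update_self]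
  congr 1
  rcases t with _ | t
  · rfl
  · simp [walkStart, diagOut]

lemma walkEdge_succ_update_self :
    walkEdge ms (update o t (!o t)) (t + 1) = s(diagIn ms o t, walkEnd ms o (t + 1)) := by
  rw [walkEdge, walkStart, diagOut_update_self]
  congr 1
  simp [walkEnd, diagIn]

lemma walkEdge_update_of_ne {b : Bool} (h₁ : k ≠ t) (h₂ : k ≠ t + 1) :
    walkEdge ms (update o t b) k = walkEdge ms o k :=
  walkEdge_congr (fun j hj => update_of_ne (by omega) _ _) (fun _ => update_of_ne h₁ _ _)

lemma walkEdgeSet_update (ht : t ≤ ms.length) :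
    (walkEdgeList ms (update o t (!o t))).toFinset =
      insert s(walkStart ms o t, diagOut ms o t) (insert s(diagIn ms o t, walkEnd ms o (t + 1))
        (((walkEdgeList ms o).toFinset.erase (walkEdge ms o (t + 1))).erase
          (walkEdge ms o t))) := by
  ext e
  simp only [mem_walkEdgeSet, Finset.mem_insert, Finset.mem_erase]
  constructor
  · rintro ⟨k, hk, rfl⟩
    by_cases h₁ : k = t
    · subst h₁; exact Or.inl (walkEdge_update_self ht)
    by_cases h₂ : k = t + 1
    · subst h₂; exact Or.inr (Or.inl walkEdge_succ_update_self)
    rw [walkEdge_update_of_ne h₁ h₂]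
    exact Or.inr (Or.inr ⟨mt (walkEdge_inj hk (by omega)).1 h₁,
      mt (walkEdge_inj hk (by omega)).1 h₂, k, hk, rfl⟩)
  · rintro (rfl | rfl | ⟨h₁, h₂, k, hk, rfl⟩)
    · exact ⟨t, by omega, walkEdge_update_self ht⟩
    · exact ⟨t + 1, by omega, walkEdge_succ_update_self⟩
    · exact ⟨k, hk, walkEdge_update_of_ne (fun h => h₁ (h ▸ rfl)) (fun h => h₂ (h ▸ rfl))⟩

/-- The walk runs around tile `t`, from its SW corner through `x` and `y` to its NE corner; flipping
the diagonal of tile `t` makes it run around the other side. -/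
lemma walkEdgeSet_update_eq (hio : IsInducedOrientation ms P o) (ht : t ≤ ms.length)
    {x y : Vtx} (hx : level x = t + 1) (hy : level y = t + 1)
    (h₁ : s(tilePos ms t, x) ∈ P) (h₂ : s(y, NEv (tilePos ms t)) ∈ P) :
    (walkEdgeList ms (update o t (!o t))).toFinset =
      insert s(tilePos ms t, y) (insert s(x, NEv (tilePos ms t))
        ((P.erase s(y, NEv (tilePos ms t))).erase s(tilePos ms t, x))) ∧
      (o t = true ↔ x = NWv (tilePos ms t)) := by
  rw [hio.2] at h₁ h₂
  obtain ⟨hs, he⟩ := walkStart_walkEnd_of_mem h₁ (level_tilePos ht) hx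
  obtain ⟨hs', he'⟩ := walkStart_walkEnd_of_mem h₂ hy (by simp [level_tilePos ht]; ring)
  rw [walkEnd, if_pos ht] at he
  rw [walkStart] at hs'
  have hw₁ : walkEdge ms o t = s(tilePos ms t, x) := by rw [walkEdge, walkEnd, if_pos ht, hs, he]
  have hw₂ : walkEdge ms o (t + 1) = s(y, NEv (tilePos ms t)) := by
    rw [walkEdge, walkStart, hs', he']
  refine ⟨?_, ?_⟩
  · rw [walkEdgeSet_update ht, hs, hs', he, he', ← hio.2, hw₁, hw₂]
  · rw [← he]
    cases h : o t <;> simp [diagIn, h, (NWv_ne_SEv _).symm]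

lemma heightSet_update_of_not_mem (ht : t ≤ ms.length) (hnot : t ∉ heightSet ms o) :
    heightSet ms (update o t (!o t)) = heightSet ms o ∪ {t} := by
  ext u
  by_cases hu : u = t
  · subst hu
    simp only [heightSet, Set.mem_ofPred_eq, not_and] at hnot
    simp only [heightSet, Set.mem_ofPred_eq, update_self, Set.mem_union, Set.mem_singleton_iff,
      or_true, iff_true, ht, true_and]
    cases h : o u <;> simp_all
  · simp [heightSet, hu]

lemma PositiveTwist.eq_walkEdgeSet {P' : Finset Edge} (hio : IsInducedOrientation ms P o)
    (htw : PositiveTwist ms P P' t) :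
    P' = (walkEdgeList ms (update o t (!o t))).toFinset ∧ t ∉ heightSet ms o := by
  obtain ⟨ht, ⟨he, hN, hS, rfl⟩ | ⟨he, hW, hE, rfl⟩⟩ := htw
  · obtain ⟨hset, ho⟩ := walkEdgeSet_update_eq (x := SEv (tilePos ms t))
      (y := NWv (tilePos ms t)) hio ht (by simp [level_tilePos ht]) (by simp [level_tilePos ht])
      hS hN
    refine ⟨hset.symm, fun h => ?_⟩
    have hot : o t = false := by simpa [(NWv_ne_SEv _).symm] using ho
    simpa [hot] using h.2.2 he
  · obtain ⟨hset, ho⟩ := walkEdgeSet_update_eq (x := NWv (tilePos ms t))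
      (y := SEv (tilePos ms t)) hio ht (by simp [level_tilePos ht]) (by simp [level_tilePos ht])
      hW hE
    refine ⟨?_, fun h => ?_⟩
    · rw [hset, Finset.insert_comm, Finset.erase_right_comm]
      rfl
    · exact he (h.2.1 (ho.2 rfl))

end SnakeGraph

open SnakeGraph

/-- `P ↦ h(P)` is a bijection between perfect matchings of a snake graph
and order ideals of the poset of `Q_G`, carrying the positive twist at tile `t` to adding
the element `t` to the ideal. -/
theorem statement12 (ms : List Bool) :
    (∀ P, IsPerfectMatching ms P → ∃! I : Set ℕ, HeightOf ms P I ∧ IsOrderIdealQ ms I) ∧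
    (∀ P P' (I : Set ℕ), IsPerfectMatching ms P → IsPerfectMatching ms P' →
      HeightOf ms P I → HeightOf ms P' I → P = P') ∧
    (∀ I : Set ℕ, IsOrderIdealQ ms I → ∃ P, IsPerfectMatching ms P ∧ HeightOf ms P I) ∧
    (∀ P P' (t : ℕ) (I I' : Set ℕ), IsPerfectMatching ms P → PositiveTwist ms P P' t →
      HeightOf ms P I → HeightOf ms P' I' → t ∉ I ∧ I' = I ∪ {t}) := by
  refine ⟨fun P hP => ?_, ?_, fun I hI => ?_, ?_⟩
  · have hio := isInducedOrientation_orientationOf hP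
    refine ⟨heightSet ms (orientationOf ms P), ⟨⟨_, hio, rfl⟩,
      isOrderIdealQ_heightSet_iff.2 (admissible_of_subset (hio.2 ▸ hP.1))⟩, ?_⟩
    rintro _ ⟨⟨o, hio', rfl⟩, -⟩
    exact heightSet_eq_iff.2 (walkEdgeSet_eq_iff.1 (hio'.2.symm.trans hio.2))
  · rintro P P' I - - ⟨o, hio, rfl⟩ ⟨o', hio', hI⟩
    rw [hio.2, hio'.2, walkEdgeSet_eq_iff, ← heightSet_eq_iff, hI]
  · have hheight := heightSet_orientationOfHeight hI.1
    have hadm : Admissible ms (orientationOfHeight I) :=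
      isOrderIdealQ_heightSet_iff.1 (hheight.symm ▸ hI)
    exact ⟨_, isPerfectMatching_walkEdgeSet hadm,
      ⟨_, ⟨walkEdgeList_nodup ms _, rfl⟩, hheight.symm⟩⟩
  · rintro P P' t _ _ - htw ⟨o, hio, rfl⟩ ⟨o', hio', rfl⟩
    obtain ⟨hP', hnot⟩ := htw.eq_walkEdgeSet hio
    refine ⟨hnot, ?_⟩
    rw [heightSet_eq_iff.2 (walkEdgeSet_eq_iff.1 (hio'.2.symm.trans hP')),
      heightSet_update_of_not_mem htw.1 hnot]
end
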